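/- Let X be a finite connected non-bipartite multigraph with deg(x) ≥ 3 for all x. Then for all vertices x, y, lim_{n→∞} q^(n)(x,y) = deg(y)/|E(X)|. -/
import Mathlib


open scoped BigOperators
open Filter

/-- A multigraph given by its set of *oriented* edges. Each oriented edge `e`
has an initial vertex `tail e = e⁻`, a terminal vertex `head e = e⁺`, and a
reversal `bar e = ě` with `ě ≠ e` (loops are counted twice). Local finiteness
is built in. -/
structure Multigraph where
  V : Type
  E : Type
  tail : E → V
  head : E → V
  bar : E → E
  bar_bar : ∀ e, bar (bar e) = e
  bar_ne : ∀ e, bar e ≠ e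
  head_bar : ∀ e, head (bar e) = tail e
  locFin : ∀ x, {e | tail e = x}.Finite

namespace Multigraph
variable (G : Multigraph)

/-- The degree of a vertex: the number of oriented edges emanating from it. -/
noncomputable def deg (x : G.V) : ℕ := (G.locFin x).toFinset.card

/-- `e → f`: `f` may follow `e` in a non-backtracking walk. -/
def Step (e f : G.E) : Prop := G.tail f = G.head e ∧ f ≠ G.bar e

/-- `e ⇒ f`: there is a non-backtracking walk from `e` to `f`. -/
def Reach : G.E → G.E → Prop := Relation.ReflTransGen G.Step

/-- One-step transition probabilities of the edge non-backtracking random walk. -/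
noncomputable def q (e f : G.E) : ℝ :=
  open Classical in
  if G.Step e f then 1 / ((G.deg (G.head e) : ℝ) - 1) else 0

/-- `n`-step transition probabilities `q_E^(n)` of the edge NBRW. -/
noncomputable def qn (G : Multigraph) : ℕ → G.E → G.E → ℝ
  | 0, e, f => open Classical in if e = f then 1 else 0
  | n + 1, e, f => ∑' g : G.E, qn G n e g * G.q g f

/-- Vertex NBRW transition probabilities:
`q^(n)(x,y) = (1/deg x) ∑_{e⁺=x, f⁺=y} q_E^(n)(e,f)`. -/
noncomputable def qv (n : ℕ) (x y : G.V) : ℝ :=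
  (1 / (G.deg x : ℝ)) *
    ∑' (e : {e : G.E // G.head e = x}) (f : {f : G.E // G.head f = y}),
      G.qn n e.1 f.1

def Adj (x y : G.V) : Prop := ∃ e : G.E, G.tail e = x ∧ G.head e = y

def Connected : Prop := ∀ x y : G.V, Relation.ReflTransGen G.Adj x y

/-- There is a walk of length `n` from `x` to `y`. -/
def WalkLen (G : Multigraph) : ℕ → G.V → G.V → Prop
  | 0, x, y => x = y
  | n + 1, x, y => ∃ z, G.Adj x z ∧ WalkLen G n z y

/-- Graph distance. -/
noncomputable def dist (x y : G.V) : ℕ := sInf {n | G.WalkLen n x y}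

/-- A cycle: a nonempty list of distinct oriented edges, with distinct initial
vertices, such that consecutive edges (cyclically) form non-backtracking steps. -/
def IsCycle (l : List G.E) : Prop :=
  l ≠ [] ∧ l.Nodup ∧ (l.map G.tail).Nodup ∧ List.Chain' G.Step (l ++ l.take 1)

/-- Small cycles are dense: some radius `R` works for every ball. -/
def SmallCyclesDense : Prop :=
  ∃ R : ℕ, ∀ x : G.V, ∃ l : List G.E, G.IsCycle l ∧ ∀ e ∈ l, G.dist x (G.tail e) ≤ R

/-- `X` is a (finite) cycle graph. -/
def IsCycleGraph : Prop := (Set.univ : Set G.V).Finite ∧ ∀ x, G.deg x = 2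

def Bipartite : Prop := ∃ c : G.V → Bool, ∀ e : G.E, c (G.tail e) ≠ c (G.head e)

end Multigraph

namespace Multigraph
open Classical
variable (G : Multigraph)

lemma tail_bar (e : G.E) : G.tail (G.bar e) = G.head e := by
  conv_rhs => rw [← G.bar_bar e]
  exact (G.head_bar (G.bar e)).symm

lemma bar_inj {e f : G.E} (h : G.bar e = G.bar f) : e = f := by
  have := congrArg G.bar h
  rwa [G.bar_bar, G.bar_bar] at this

lemma reach_bar_reach {e f : G.E} (h : G.Reach e f) : G.Reach (G.bar f) (G.bar e) := by
  induction h with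
  | refl => exact Relation.ReflTransGen.refl
  | tail _ hstep ih =>
    rename_i b c _
    refine Relation.ReflTransGen.head ?_ ih
    constructor
    · rw [G.tail_bar, G.head_bar, hstep.1]
    · intro hh
      exact hstep.2 (by rw [← G.bar_bar c, hh, G.bar_bar])

lemma step_reach_closed {T : Finset G.E} (hT : ∀ a ∈ T, ∀ b, G.Step a b → b ∈ T)
    {a b : G.E} (ha : a ∈ T) (h : G.Reach a b) : b ∈ T := by
  induction h with
  | refl => exact ha
  | tail _ hstep ih => exact hT _ ih _ hstep


section Comb
variable [Fintype G.E]

/-- Edges out of a vertex, as a Finset. -/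
noncomputable def outS (x : G.V) : Finset G.E :=
  open Classical in Finset.univ.filter (fun e => G.tail e = x)

lemma mem_outS {x : G.V} {e : G.E} : e ∈ G.outS x ↔ G.tail e = x := by
  simp [outS]

lemma outS_card (x : G.V) : (G.outS x).card = G.deg x := by
  unfold deg
  congr 1
  ext e
  simp [outS, Set.Finite.mem_toFinset]

variable (hdeg : ∀ x, 3 ≤ G.deg x)
include hdeg

lemma exists_out (x : G.V) : ∃ e, G.tail e = x := by
  have h : 0 < (G.outS x).card := by
    rw [outS_card]; exact Nat.lt_of_lt_of_le (by norm_num) (hdeg x)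
  obtain ⟨e, he⟩ := Finset.card_pos.mp h
  exact ⟨e, (G.mem_outS).mp he⟩

/-- choose an out-edge avoiding two forbidden edges -/
lemma exists_out_ne (x : G.V) (a b : G.E) : ∃ e, G.tail e = x ∧ e ≠ a ∧ e ≠ b := by
  classical
  have h3 : 3 ≤ (G.outS x).card := by rw [outS_card]; exact hdeg x
  have h : 0 < (((G.outS x).erase a).erase b).card := by
    have h1 := Finset.pred_card_le_card_erase (a := a) (s := G.outS x)
    have h2 := Finset.pred_card_le_card_erase (a := b) (s := (G.outS x).erase a)
    omega
  obtain ⟨e, he⟩ := Finset.card_pos.mp h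
  simp only [Finset.mem_erase] at he
  exact ⟨e, (G.mem_outS).mp he.2.2, he.2.1, he.1⟩

/-- Irreducibility of the non-backtracking edge relation. -/
theorem reach_all (hconn : G.Connected) : ∀ e f : G.E, G.Reach e f := by
  classical
  -- the collection of nonempty Step-closed Finsets
  by_cases hne : Nonempty G.E
  swap
  · intro e; exact absurd ⟨e⟩ hne
  set C : Set (Finset G.E) :=
    {S | S.Nonempty ∧ ∀ a ∈ S, ∀ b, G.Step a b → b ∈ S} with hC
  have hunivC : (Finset.univ : Finset G.E) ∈ C :=
    ⟨Finset.univ_nonempty, fun _ _ b _ => Finset.mem_univ b⟩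
  have hgoal : ∀ T ∈ C, ∀ S ∈ C, T.card ≤ S.card → True := fun _ _ _ _ _ => trivial
  -- pick minimal-cardinality member
  have hKne : {k | ∃ S ∈ C, S.card = k}.Nonempty := ⟨_, Finset.univ, hunivC, rfl⟩
  obtain ⟨T, hTC, hTcard⟩ := Nat.sInf_mem hKne
  have hmin : ∀ S ∈ C, T.card ≤ S.card := by
    intro S hS
    rw [hTcard]
    exact Nat.sInf_le ⟨S, hS, rfl⟩
  obtain ⟨hTne, hTstep⟩ := hTC
  -- T is strongly connected
  have hsc : ∀ a ∈ T, ∀ b ∈ T, G.Reach a b := by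
    intro a ha b hb
    set R : Finset G.E := T.filter (fun x => G.Reach a x) with hR
    have hRC : R ∈ C := by
      refine ⟨⟨a, Finset.mem_filter.mpr ⟨ha, Relation.ReflTransGen.refl⟩⟩, ?_⟩
      intro x hx y hy
      simp only [hR, Finset.mem_filter] at hx ⊢
      exact ⟨hTstep _ hx.1 _ hy, hx.2.tail hy⟩
    have hsub : R ⊆ T := Finset.filter_subset _ _
    have : R = T := Finset.eq_of_subset_of_card_le hsub (hmin R hRC)
    have hb' : b ∈ R := this ▸ hb
    simp only [hR, Finset.mem_filter] at hb'
    exact hb'.2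
  -- T contains a bar pair
  have hbarpair : ∃ a ∈ T, G.bar a ∈ T := by
    by_contra hno
    push_neg at hno
    -- head is injective on T
    have hinj : ∀ a ∈ T, ∀ b ∈ T, G.head a = G.head b → a = b := by
      intro a ha b hb hh
      by_contra hab
      have : G.Step b (G.bar a) := by
        constructor
        · rw [G.tail_bar, hh]
        · intro hx; exact hab (G.bar_inj hx)
      exact hno a ha (hTstep _ hb _ this)
    -- out-edges except the bar of the in-edge are in T
    have hout : ∀ a ∈ T, ∀ f, G.tail f = G.head a → f ≠ G.bar a → f ∈ T := by
      intro a ha f h1 h2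
      exact hTstep _ ha _ ⟨h1, h2⟩
    -- |T| ≥ 2
    obtain ⟨a0, ha0⟩ := hTne
    have hT2 : ∃ c ∈ T, c ≠ a0 := by
      obtain ⟨c, hc1, hc2, hc3⟩ := G.exists_out_ne hdeg (G.head a0) (G.bar a0) a0
      exact ⟨c, hout a0 ha0 c hc1 hc2, hc3⟩
    have hTother : ∀ a ∈ T, ∃ c ∈ T, c ≠ a := by
      intro a ha
      obtain ⟨c, hc1, hc2, hc3⟩ := G.exists_out_ne hdeg (G.head a) (G.bar a) a
      exact ⟨c, hout a ha c hc1 hc2, hc3⟩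
    have hpred : ∀ a ∈ T, ∃ b ∈ T, G.Step b a := by
      intro a ha
      obtain ⟨c, hcT, hca⟩ := hTother a ha
      have hr : G.Reach c a := hsc c hcT a ha
      rcases Relation.ReflTransGen.cases_tail hr with h | ⟨b, hrb, hstep⟩
      · exact absurd h.symm hca
      · exact ⟨b, G.step_reach_closed hTstep hcT hrb, hstep⟩
    set VT : Finset G.V := T.image G.head with hVT
    have hcardVT : VT.card = T.card :=
      Finset.card_image_of_injOn (fun a ha b hb h => hinj a ha b hb h)
    have htails : ∀ a ∈ T, G.tail a ∈ VT := by
      intro a ha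
      obtain ⟨b, hbT, hb⟩ := hpred a ha
      exact Finset.mem_image.mpr ⟨b, hbT, hb.1.symm⟩
    have hsum : T.card = ∑ v ∈ VT, (T.filter (fun a => G.tail a = v)).card :=
      Finset.card_eq_sum_card_fiberwise htails
    have hfiber : ∀ v ∈ VT, 2 ≤ (T.filter (fun a => G.tail a = v)).card := by
      intro v hv
      obtain ⟨a, haT, hhead⟩ := Finset.mem_image.mp hv
      have hsub : (G.outS v).erase (G.bar a) ⊆ T.filter (fun a => G.tail a = v) := by
        intro f hf
        rw [Finset.mem_erase] at hf
        obtain ⟨hf1, hf2⟩ := hf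
        rw [G.mem_outS] at hf2
        exact Finset.mem_filter.mpr ⟨hout a haT f (by rw [hf2, hhead]) hf1, hf2⟩
      have h1 := Finset.card_le_card hsub
      have h2 := Finset.pred_card_le_card_erase (a := G.bar a) (s := G.outS v)
      have h3 : (G.outS v).card = G.deg v := G.outS_card v
      have h4 := hdeg v
      omega
    have hineq : 2 * VT.card ≤ T.card := by
      rw [hsum]
      calc 2 * VT.card = ∑ _v ∈ VT, 2 := by
            rw [Finset.sum_const, smul_eq_mul, mul_comm]
        _ ≤ _ := Finset.sum_le_sum hfiber
    have hTpos : 0 < T.card := Finset.card_pos.mpr ⟨a0, ha0⟩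
    omega
  -- T is closed under bar
  obtain ⟨a0, ha0T, hbar0T⟩ := hbarpair
  have hbarT : ∀ x ∈ T, G.bar x ∈ T := by
    intro x hx
    exact G.step_reach_closed hTstep hbar0T (G.reach_bar_reach (hsc x hx a0 ha0T))
  have hallout : ∀ a ∈ T, ∀ f, G.tail f = G.head a → f ∈ T := by
    intro a ha f h1
    by_cases hf : f = G.bar a
    · subst hf; exact hbarT a ha
    · exact hTstep a ha f ⟨h1, hf⟩
  have hvert : ∀ u, ∀ f, G.tail f = u → f ∈ T := by
    have key : ∀ u, Relation.ReflTransGen G.Adj (G.head a0) u →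
        ∀ f, G.tail f = u → f ∈ T := by
      intro u hu
      induction hu with
      | refl => exact fun f hf => hallout a0 ha0T f hf
      | tail _ hadj ih =>
        obtain ⟨g, hg1, hg2⟩ := hadj
        intro f hf
        exact hallout g (ih g hg1) f (by rw [hf, hg2])
    intro u
    exact key u (hconn _ u)
  intro e f
  exact hsc e (hvert _ e rfl) f (hvert _ f rfl)

end Comb
end Multigraph

namespace Multigraph
variable (G : Multigraph) [Fintype G.E] [DecidableEq G.E]

noncomputable def M : Matrix G.E G.E ℝ := Matrix.of fun e f => G.q e f

lemma M_apply (e f : G.E) : G.M e f = G.q e f := rfl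

lemma qn_eq_pow (n : ℕ) (e f : G.E) : G.qn n e f = (G.M ^ n) e f := by
  induction n generalizing e f with
  | zero =>
    rw [pow_zero, Matrix.one_apply]
    unfold qn
    congr
  | succ n ih =>
    show (∑' g : G.E, G.qn n e g * G.q g f) = _
    rw [tsum_fintype, pow_succ, Matrix.mul_apply]
    exact Finset.sum_congr rfl fun g _ => by rw [ih, M_apply]

noncomputable def barEquiv : G.E ≃ G.E := ⟨G.bar, G.bar, G.bar_bar, G.bar_bar⟩

section WithDeg
variable (hdeg : ∀ x, 3 ≤ G.deg x)
include hdeg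

lemma deg_real_pos (x : G.V) : 0 < (G.deg x : ℝ) - 1 := by
  have := hdeg x
  have : (3 : ℝ) ≤ (G.deg x : ℝ) := by exact_mod_cast this
  linarith

lemma q_nonneg (e f : G.E) : 0 ≤ G.q e f := by
  unfold q
  split
  · have := G.deg_real_pos hdeg (G.head e)
    positivity
  · exact le_refl 0

lemma q_pos_of_step {e f : G.E} (h : G.Step e f) : 0 < G.q e f := by
  unfold q
  rw [if_pos h]
  have := G.deg_real_pos hdeg (G.head e)
  positivity

lemma card_erase_outS {x : G.V} {a : G.E} (ha : a ∈ G.outS x) :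
    (((G.outS x).erase a).card : ℝ) = (G.deg x : ℝ) - 1 := by
  rw [Finset.card_erase_of_mem ha, G.outS_card]
  have := hdeg x
  push_cast [Nat.cast_sub (by omega : 1 ≤ G.deg x)]
  ring

lemma rowsum_q (e : G.E) : ∑ f, G.q e f = 1 := by
  classical
  have hmem : ∀ f, G.Step e f ↔ f ∈ (G.outS (G.head e)).erase (G.bar e) := by
    intro f
    rw [Finset.mem_erase, G.mem_outS]
    exact ⟨fun h => ⟨h.2, h.1⟩, fun h => ⟨h.2, h.1⟩⟩
  have : ∀ f, G.q e f = if f ∈ (G.outS (G.head e)).erase (G.bar e)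
      then 1 / ((G.deg (G.head e) : ℝ) - 1) else 0 := by
    intro f
    unfold q
    exact if_congr (hmem f) rfl rfl
  rw [Finset.sum_congr rfl fun f _ => this f, Finset.sum_ite_mem, Finset.univ_inter,
    Finset.sum_const, nsmul_eq_mul]
  rw [G.card_erase_outS hdeg (G.mem_outS.mpr (G.tail_bar e))]
  have := G.deg_real_pos hdeg (G.head e)
  field_simp

lemma colsum_q (f : G.E) : ∑ e, G.q e f = 1 := by
  classical
  rw [← Equiv.sum_comp G.barEquiv (fun e => G.q e f)]
  have : ∀ x, G.q (G.barEquiv x) f = if x ∈ (G.outS (G.tail f)).erase f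
      then 1 / ((G.deg (G.tail f) : ℝ) - 1) else 0 := by
    intro x
    show G.q (G.bar x) f = _
    by_cases hx : x ∈ (G.outS (G.tail f)).erase f
    · have hx' := hx
      rw [Finset.mem_erase, G.mem_outS] at hx'
      have hstep : G.Step (G.bar x) f := by
        refine ⟨by rw [G.head_bar, hx'.2], ?_⟩
        rw [G.bar_bar]
        exact fun h => hx'.1 h.symm
      unfold q
      rw [if_pos hstep, if_pos hx, G.head_bar, hx'.2]
    · have hx' := hx
      rw [Finset.mem_erase, G.mem_outS] at hx'
      push_neg at hx'
      unfold q
      rw [if_neg hx, if_neg]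
      intro hstep
      obtain ⟨h1, h2⟩ := hstep
      rw [G.head_bar] at h1
      rw [G.bar_bar] at h2
      exact hx' (fun hh => h2 hh.symm) h1.symm
  rw [Finset.sum_congr rfl fun x _ => this x, Finset.sum_ite_mem, Finset.univ_inter,
    Finset.sum_const, nsmul_eq_mul]
  rw [G.card_erase_outS hdeg (G.mem_outS.mpr rfl)]
  have := G.deg_real_pos hdeg (G.tail f)
  field_simp

lemma pow_nonneg' (n : ℕ) (e f : G.E) : 0 ≤ (G.M ^ n) e f := by
  induction n generalizing e f with
  | zero => rw [pow_zero, Matrix.one_apply]; split <;> norm_num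
  | succ n ih =>
    rw [pow_succ, Matrix.mul_apply]
    exact Finset.sum_nonneg fun g _ => mul_nonneg (ih e g) (G.q_nonneg hdeg g f)

lemma pow_rowsum (n : ℕ) (e : G.E) : ∑ f, (G.M ^ n) e f = 1 := by
  induction n generalizing e with
  | zero => simp [Matrix.one_apply]
  | succ n ih =>
    simp only [pow_succ, Matrix.mul_apply]
    rw [Finset.sum_comm]
    calc ∑ g, ∑ f, (G.M ^ n) e g * G.M g f
        = ∑ g, (G.M ^ n) e g * ∑ f, G.M g f := by
          exact Finset.sum_congr rfl fun g _ => (Finset.mul_sum _ _ _).symm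
      _ = 1 := by
          simp only [M_apply]
          rw [Finset.sum_congr rfl fun g _ => by rw [G.rowsum_q hdeg g]]
          simpa using ih e

lemma pow_colsum (n : ℕ) (f : G.E) : ∑ e, (G.M ^ n) e f = 1 := by
  induction n generalizing f with
  | zero => simp [Matrix.one_apply]
  | succ n ih =>
    simp only [pow_succ, Matrix.mul_apply]
    rw [Finset.sum_comm]
    calc ∑ g, ∑ e, (G.M ^ n) e g * G.M g f
        = ∑ g, (∑ e, (G.M ^ n) e g) * G.M g f := by
          exact Finset.sum_congr rfl fun g _ => (Finset.sum_mul _ _ _).symm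
      _ = 1 := by
          rw [Finset.sum_congr rfl fun g _ => by rw [ih g, one_mul]]
          simpa only [M_apply] using G.colsum_q hdeg f

lemma Ppos_zero (e : G.E) : 0 < (G.M ^ 0) e e := by
  rw [pow_zero, Matrix.one_apply_eq]; norm_num

lemma Ppos_add {m n : ℕ} {e g f : G.E} (hm : 0 < (G.M ^ m) e g) (hn : 0 < (G.M ^ n) g f) :
    0 < (G.M ^ (m + n)) e f := by
  rw [pow_add, Matrix.mul_apply]
  exact Finset.sum_pos'
    (fun h _ => mul_nonneg (G.pow_nonneg' hdeg m e h) (G.pow_nonneg' hdeg n h f))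
    ⟨g, Finset.mem_univ g, mul_pos hm hn⟩

lemma Ppos_step {n : ℕ} {e g f : G.E} (h : 0 < (G.M ^ n) e g) (hs : G.Step g f) :
    0 < (G.M ^ (n + 1)) e f := by
  refine G.Ppos_add hdeg h ?_
  rw [pow_one, M_apply]
  exact G.q_pos_of_step hdeg hs

lemma Ppos_reach {e f : G.E} (h : G.Reach e f) : ∃ n, 0 < (G.M ^ n) e f := by
  induction h with
  | refl => exact ⟨0, G.Ppos_zero hdeg e⟩
  | tail _ hs ih =>
    obtain ⟨n, hn⟩ := ih
    exact ⟨n + 1, G.Ppos_step hdeg hn hs⟩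

end WithDeg
end Multigraph

namespace Multigraph
variable (G : Multigraph) [Fintype G.E] [DecidableEq G.E]

lemma exists_consec [Nonempty G.E] (hdeg : ∀ x, 3 ≤ G.deg x) (hconn : G.Connected)
    (hbip : ¬ G.Bipartite) :
    ∃ a : G.E, ∃ k : ℕ, 1 ≤ k ∧ 0 < (G.M ^ k) a a ∧ 0 < (G.M ^ (k + 1)) a a := by
  classical
  have hirr := G.reach_all hdeg hconn
  obtain ⟨a⟩ := ‹Nonempty G.E›
  have hP : ∀ e f : G.E, ∃ n, 0 < (G.M ^ n) e f := fun e f => G.Ppos_reach hdeg (hirr e f)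
  set len : G.E → ℕ := fun e => Classical.choose (hP a e) with hlen
  have hlen_spec : ∀ e, 0 < (G.M ^ (len e)) a e := fun e => Classical.choose_spec (hP a e)
  set S : Set ℕ := {n | 0 < (G.M ^ n) a a} with hS
  set H : AddSubgroup ℤ := AddSubgroup.closure ((fun n : ℕ => (n : ℤ)) '' S) with hH
  have hSH : ∀ n ∈ S, (n : ℤ) ∈ H := fun n hn => AddSubgroup.subset_closure ⟨n, hn, rfl⟩
  have hcong : ∀ (p q : ℕ) (e : G.E), 0 < (G.M ^ p) a e → 0 < (G.M ^ q) a e →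
      (p : ℤ) - (q : ℤ) ∈ H := by
    intro p q e hp hq
    obtain ⟨r, hr⟩ := hP e a
    have h1 : (((p + r) : ℕ) : ℤ) ∈ H := hSH _ (G.Ppos_add hdeg hp hr)
    have h2 : (((q + r) : ℕ) : ℤ) ∈ H := hSH _ (G.Ppos_add hdeg hq hr)
    have h3 := H.sub_mem h1 h2
    have : ((p : ℤ) + r) - ((q : ℤ) + r) = (p : ℤ) - q := by ring
    rw [← this]
    push_cast at h3
    exact h3
  have hstepc : ∀ e f, G.Step e f → ((len f : ℤ) - ((len e : ℤ) + 1)) ∈ H := by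
    intro e f hs
    have hp := G.Ppos_step hdeg (hlen_spec e) hs
    have h := hcong (len f) (len e + 1) f (hlen_spec f) hp
    push_cast at h
    exact h
  have htailc : ∀ e f, G.tail e = G.tail f → ((len e : ℤ) - (len f : ℤ)) ∈ H := by
    intro e f ht
    obtain ⟨x, hx1, hx2, hx3⟩ := G.exists_out_ne hdeg (G.tail e) e f
    have hse : G.Step (G.bar x) e :=
      ⟨by rw [G.head_bar, hx1], fun h => hx2 ((h.trans (G.bar_bar x)).symm)⟩
    have hsf : G.Step (G.bar x) f :=
      ⟨by rw [G.head_bar, hx1, ht], fun h => hx3 ((h.trans (G.bar_bar x)).symm)⟩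
    have h1 := hstepc _ _ hse
    have h2 := hstepc _ _ hsf
    have h3 := H.sub_mem h1 h2
    have : ((len e : ℤ) - ((len (G.bar x) : ℤ) + 1)) - ((len f : ℤ) - ((len (G.bar x) : ℤ) + 1))
        = (len e : ℤ) - len f := by ring
    rw [← this]
    exact h3
  have hbarc : ∀ e, ((len (G.bar e) : ℤ) - ((len e : ℤ) + 1)) ∈ H := by
    intro e
    obtain ⟨y, hy1, hy2, _⟩ := G.exists_out_ne hdeg (G.head e) (G.bar e) (G.bar e)
    have h1 := hstepc _ _ (⟨hy1, hy2⟩ : G.Step e y)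
    have h2 := htailc (G.bar e) y (by rw [G.tail_bar, hy1])
    have h3 := H.add_mem h2 h1
    have : ((len (G.bar e) : ℤ) - (len y : ℤ)) + ((len y : ℤ) - ((len e : ℤ) + 1))
        = (len (G.bar e) : ℤ) - ((len e : ℤ) + 1) := by ring
    rw [← this]
    exact h3
  have h2H : (2 : ℤ) ∈ H := by
    have h1 := hbarc a
    have h2 := hbarc (G.bar a)
    rw [G.bar_bar] at h2
    have h3 := H.add_mem h1 h2
    have hneg : (-2 : ℤ) ∈ H := by
      have : ((len (G.bar a) : ℤ) - ((len a : ℤ) + 1)) + ((len a : ℤ) - ((len (G.bar a) : ℤ) + 1))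
          = -2 := by ring
      rw [← this]
      exact h3
    simpa using H.neg_mem hneg
  obtain ⟨g, hg⟩ := Int.subgroup_cyclic H
  have hgdvd : ∀ x ∈ H, g ∣ x := by
    intro x hx
    rw [hg, AddSubgroup.mem_closure_singleton] at hx
    obtain ⟨n, hn⟩ := hx
    exact ⟨n, by rw [← hn]; rw [smul_eq_mul]; ring⟩
  have hg2 : g ∣ 2 := hgdvd _ h2H
  have hgnot2 : ¬ ((2 : ℤ) ∣ g) := by
    intro h2g
    have hHdvd : ∀ x ∈ H, (2 : ℤ) ∣ x := fun x hx => dvd_trans h2g (hgdvd x hx)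
    have hev : ∀ v : G.V, ∃ e, G.tail e = v := G.exists_out hdeg
    set ev : G.V → G.E := fun v => Classical.choose (hev v) with hev'
    have hevs : ∀ v, G.tail (ev v) = v := fun v => Classical.choose_spec (hev v)
    refine hbip ⟨fun v => decide (len (ev v) % 2 = 1), ?_⟩
    intro k
    obtain ⟨y, hy1, hy2, _⟩ := G.exists_out_ne hdeg (G.head k) (G.bar k) (G.bar k)
    have h1 := hstepc _ _ (⟨hy1, hy2⟩ : G.Step k y)
    have h2 := htailc (ev (G.tail k)) k (by rw [hevs])
    have h3 := htailc (ev (G.head k)) y (by rw [hevs, hy1])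
    have hcomb : ((len (ev (G.head k)) : ℤ) - (len (ev (G.tail k)) : ℤ) - 1) ∈ H := by
      have h4 := H.sub_mem (H.add_mem h3 h1) h2
      have : (((len (ev (G.head k)) : ℤ) - len y) + ((len y : ℤ) - ((len k : ℤ) + 1)))
          - ((len (ev (G.tail k)) : ℤ) - (len k : ℤ))
          = (len (ev (G.head k)) : ℤ) - (len (ev (G.tail k)) : ℤ) - 1 := by ring
      rw [← this]
      exact h4
    obtain ⟨t, ht⟩ := hHdvd _ hcomb
    simp only [ne_eq, decide_eq_decide]
    omega
  have h1H : (1 : ℤ) ∈ H := by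
    have hn2 : g.natAbs ∣ 2 := by
      have := Int.natAbs_dvd_natAbs.mpr hg2
      simpa using this
    have hcase : g.natAbs = 1 ∨ g.natAbs = 2 := (Nat.dvd_prime Nat.prime_two).mp hn2
    have hgpm : g = 1 ∨ g = -1 := by
      rcases hcase with h | h
      · rcases Int.natAbs_eq g with h' | h' <;> rw [h] at h' <;> [left; right] <;> exact_mod_cast h'
      · exfalso
        apply hgnot2
        rcases Int.natAbs_eq g with h' | h' <;> rw [h] at h'
        · rw [h']; norm_num
        · rw [h']; norm_num
    rw [hg, AddSubgroup.mem_closure_singleton]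
    rcases hgpm with h | h
    · exact ⟨1, by rw [h]; simp⟩
    · exact ⟨-1, by rw [h]; simp⟩
  have hrep : ∃ m n : ℕ, m ∈ S ∧ n ∈ S ∧ (1 : ℤ) = (m : ℤ) - n := by
    have h0S : (0 : ℕ) ∈ S := G.Ppos_zero hdeg a
    have haddS : ∀ m n, m ∈ S → n ∈ S → m + n ∈ S := fun m n hm hn => G.Ppos_add hdeg hm hn
    refine AddSubgroup.closure_induction ?_ ?_ ?_ ?_ h1H
    · rintro x ⟨n, hn, rfl⟩
      exact ⟨n, 0, hn, h0S, by simp⟩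
    · exact ⟨0, 0, h0S, h0S, by simp⟩
    · rintro x y - - ⟨m1, n1, hm1, hn1, rfl⟩ ⟨m2, n2, hm2, hn2, rfl⟩
      exact ⟨m1 + m2, n1 + n2, haddS _ _ hm1 hm2, haddS _ _ hn1 hn2, by push_cast; ring⟩
    · rintro x - ⟨m1, n1, hm1, hn1, rfl⟩
      exact ⟨n1, m1, hn1, hm1, by push_cast; ring⟩
  obtain ⟨m, n, hm, hn, hmn⟩ := hrep
  have hmn' : m = n + 1 := by omega
  subst hmn'
  refine ⟨a, n + (n + 1), by omega, ?_, ?_⟩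
  · exact G.Ppos_add hdeg hn hm
  · have : n + (n + 1) + 1 = (n + 1) + (n + 1) := by omega
    rw [this]
    exact G.Ppos_add hdeg hm hm

end Multigraph

namespace Multigraph
variable (G : Multigraph) [Fintype G.E] [DecidableEq G.E]

lemma exists_prim [Nonempty G.E] (hdeg : ∀ x, 3 ≤ G.deg x) (hconn : G.Connected)
    (hbip : ¬ G.Bipartite) :
    ∃ N : ℕ, ∀ e f : G.E, 0 < (G.M ^ N) e f := by
  classical
  obtain ⟨a, k, hk1, hk, hk'⟩ := G.exists_consec hdeg hconn hbip
  have hP : ∀ e f : G.E, ∃ n, 0 < (G.M ^ n) e f :=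
    fun e f => G.Ppos_reach hdeg (G.reach_all hdeg hconn e f)
  have hmul : ∀ (c s : ℕ), 0 < (G.M ^ s) a a → 0 < (G.M ^ (c * s)) a a := by
    intro c
    induction c with
    | zero => intro s _; simpa using G.Ppos_zero hdeg a
    | succ c ih =>
      intro s hs
      have h := G.Ppos_add hdeg (ih s hs) hs
      rw [Nat.succ_mul]
      exact h
  have hbig : ∀ t, k * k ≤ t → 0 < (G.M ^ t) a a := by
    intro t htt
    have h1 : t % k < k := Nat.mod_lt _ (by omega)
    have h2 : t / k * k + t % k = t := by have h := Nat.div_add_mod t k; rw [Nat.mul_comm] at h; exact h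
    have h3 : t % k ≤ t / k := by
      by_contra hcon
      push_neg at hcon
      have : t / k + 1 ≤ k := by omega
      have hb : (t / k + 1) * k ≤ k * k := Nat.mul_le_mul_right k this
      have hc : t < (t / k + 1) * k := by
        calc t = t / k * k + t % k := h2.symm
          _ < t / k * k + k := by omega
          _ = (t / k + 1) * k := by ring
      omega
    have h4 : t = (t / k - t % k) * k + (t % k) * (k + 1) := by
      have hcalc : (t / k - t % k) * k + (t % k) * (k + 1)
          = (t / k - t % k + t % k) * k + t % k := by ring
      rw [hcalc, Nat.sub_add_cancel h3]
      omega
    rw [h4]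
    exact G.Ppos_add hdeg (hmul _ k hk) (hmul _ (k + 1) hk')
  set pe : G.E → ℕ := fun e => Classical.choose (hP e a) with hpe'
  have hpe : ∀ e, 0 < (G.M ^ (pe e)) e a := fun e => Classical.choose_spec (hP e a)
  set sf : G.E → ℕ := fun f => Classical.choose (hP a f) with hsf'
  have hsf : ∀ f, 0 < (G.M ^ (sf f)) a f := fun f => Classical.choose_spec (hP a f)
  set P : ℕ := Finset.univ.sup pe with hP'
  set Sm : ℕ := Finset.univ.sup sf with hSm'
  refine ⟨k * k + P + Sm, ?_⟩
  intro e f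
  have hpeP : pe e ≤ P := Finset.le_sup (Finset.mem_univ e)
  have hsfS : sf f ≤ Sm := Finset.le_sup (Finset.mem_univ f)
  have hsplit : k * k + P + Sm = pe e + (k * k + (P - pe e) + (Sm - sf f) + sf f) := by omega
  rw [hsplit]
  exact G.Ppos_add hdeg (hpe e) (G.Ppos_add hdeg (hbig _ (by omega)) (hsf f))

end Multigraph

namespace Multigraph
variable (G : Multigraph) [Fintype G.E] [DecidableEq G.E]

lemma tendsto_pow_entry [Nonempty G.E] (hdeg : ∀ x, 3 ≤ G.deg x) (hconn : G.Connected)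
    (hbip : ¬ G.Bipartite) (e₀ f₀ : G.E) :
    Filter.Tendsto (fun n => (G.M ^ n) e₀ f₀) Filter.atTop
      (nhds (1 / (Fintype.card G.E : ℝ))) := by
  classical
  obtain ⟨N, hN⟩ := G.exists_prim hdeg hconn hbip
  set s : ℕ := Fintype.card G.E with hs'
  have hs : 0 < s := Fintype.card_pos
  set A : Matrix G.E G.E ℝ := G.M ^ N with hA
  have hEne : (Finset.univ : Finset (G.E × G.E)).Nonempty := Finset.univ_nonempty
  set δ : ℝ := Finset.inf' Finset.univ hEne (fun p : G.E × G.E => A p.1 p.2) with hδ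
  have hδpos : 0 < δ := by
    rw [hδ, Finset.lt_inf'_iff]
    exact fun p _ => hN p.1 p.2
  have hδle : ∀ e f, δ ≤ A e f := fun e f => Finset.inf'_le _ (Finset.mem_univ (e, f))
  have hune : (Finset.univ : Finset G.E).Nonempty := Finset.univ_nonempty
  set col : ℕ → G.E → ℝ := fun n e => (G.M ^ n) e f₀ with hcol
  set mi : ℕ → ℝ := fun n => Finset.univ.inf' hune (col n) with hmi
  set ma : ℕ → ℝ := fun n => Finset.univ.sup' hune (col n) with hma
  have mile : ∀ n e, mi n ≤ col n e := fun n e => Finset.inf'_le _ (Finset.mem_univ e)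
  have male : ∀ n e, col n e ≤ ma n := fun n e => Finset.le_sup' _ (Finset.mem_univ e)
  have rs1 : ∀ e, ∑ g, G.M e g = 1 := by
    intro e
    simpa only [M_apply] using G.rowsum_q hdeg e
  have hMnn : ∀ e g, 0 ≤ G.M e g := fun e g => G.q_nonneg hdeg e g
  have hrecur : ∀ n e, col (n + 1) e = ∑ g, G.M e g * col n g := by
    intro n e
    show (G.M ^ (n + 1)) e f₀ = _
    rw [pow_succ']
    rw [Matrix.mul_apply]
  have hmi_mono : ∀ n, mi n ≤ mi (n + 1) := by
    intro n
    apply Finset.le_inf'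
    intro e _
    rw [hrecur n e]
    calc mi n = (∑ g, G.M e g) * mi n := by rw [rs1 e, one_mul]
      _ = ∑ g, G.M e g * mi n := by rw [Finset.sum_mul]
      _ ≤ ∑ g, G.M e g * col n g :=
          Finset.sum_le_sum fun g _ => mul_le_mul_of_nonneg_left (mile n g) (hMnn e g)
  have hma_mono : ∀ n, ma (n + 1) ≤ ma n := by
    intro n
    apply Finset.sup'_le
    intro e _
    rw [hrecur n e]
    calc ∑ g, G.M e g * col n g
        ≤ ∑ g, G.M e g * ma n :=
          Finset.sum_le_sum fun g _ => mul_le_mul_of_nonneg_left (male n g) (hMnn e g)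
      _ = (∑ g, G.M e g) * ma n := by rw [Finset.sum_mul]
      _ = ma n := by rw [rs1 e, one_mul]
  set DD : ℕ → ℝ := fun n => ma n - mi n with hDD
  have hDD0 : ∀ n, 0 ≤ DD n := by
    intro n
    have := mile n (Classical.arbitrary G.E)
    have := male n (Classical.arbitrary G.E)
    simp only [hDD]
    linarith
  have hDDanti : Antitone DD := by
    apply antitone_nat_of_succ_le
    intro n
    simp only [hDD]
    have := hmi_mono n
    have := hma_mono n
    linarith
  set c : ℝ := 1 - (s : ℝ) * δ with hc
  have hsδ1 : (s : ℝ) * δ ≤ 1 := by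
    have h1 : (s : ℝ) * δ = ∑ _g : G.E, δ := by
      rw [Finset.sum_const, nsmul_eq_mul, Finset.card_univ]
    have h2 : ∑ _g : G.E, δ ≤ ∑ g, A (Classical.arbitrary G.E) g :=
      Finset.sum_le_sum fun g _ => hδle _ g
    have h3 : ∑ g, A (Classical.arbitrary G.E) g = 1 := G.pow_rowsum hdeg N _
    linarith
  have hc0 : 0 ≤ c := by rw [hc]; linarith
  have hc1 : c < 1 := by
    rw [hc]
    have : 0 < (s : ℝ) * δ := by positivity
    linarith
  have key : ∀ n, DD (N + n) ≤ c * DD n := by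
    intro n
    obtain ⟨e1, -, hma'⟩ := Finset.exists_mem_eq_sup' hune (col (N + n))
    obtain ⟨e2, -, hmi'⟩ := Finset.exists_mem_eq_inf' hune (col (N + n))
    have hexp : ∀ e, col (N + n) e = ∑ g, A e g * col n g := by
      intro e
      show (G.M ^ (N + n)) e f₀ = _
      rw [pow_add, Matrix.mul_apply]
    have hr1 : ∑ g, A e1 g = 1 := G.pow_rowsum hdeg N e1
    have hr2 : ∑ g, A e2 g = 1 := G.pow_rowsum hdeg N e2
    have hdiff : col (N + n) e1 - col (N + n) e2
        = ∑ g, (A e1 g - A e2 g) * (col n g - mi n) := by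
      rw [hexp, hexp]
      have expand : ∀ g : G.E, (A e1 g - A e2 g) * (col n g - mi n)
          = (A e1 g * col n g - A e2 g * col n g - A e1 g * mi n) + A e2 g * mi n := by
        intro g; ring
      rw [Finset.sum_congr rfl fun g _ => expand g, Finset.sum_add_distrib,
        Finset.sum_sub_distrib, Finset.sum_sub_distrib, ← Finset.sum_mul, ← Finset.sum_mul,
        hr1, hr2]
      ring
    have hbound : ∑ g, (A e1 g - A e2 g) * (col n g - mi n)
        ≤ (∑ g, (A e1 g - min (A e1 g) (A e2 g))) * DD n := by
      rw [Finset.sum_mul]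
      refine Finset.sum_le_sum fun g _ => ?_
      have h1 : 0 ≤ col n g - mi n := sub_nonneg.mpr (mile n g)
      have h2 : col n g - mi n ≤ DD n := by
        have := male n g
        simp only [hDD]
        linarith
      have h3 : A e1 g - A e2 g ≤ A e1 g - min (A e1 g) (A e2 g) :=
        sub_le_sub_left (min_le_right _ _) _
      have h4 : 0 ≤ A e1 g - min (A e1 g) (A e2 g) := sub_nonneg.mpr (min_le_left _ _)
      calc (A e1 g - A e2 g) * (col n g - mi n)
          ≤ (A e1 g - min (A e1 g) (A e2 g)) * (col n g - mi n) :=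
            mul_le_mul_of_nonneg_right h3 h1
        _ ≤ (A e1 g - min (A e1 g) (A e2 g)) * DD n := mul_le_mul_of_nonneg_left h2 h4
    have hsummin : ∑ g, (A e1 g - min (A e1 g) (A e2 g)) ≤ c := by
      rw [Finset.sum_sub_distrib, hr1]
      have h5 : (s : ℝ) * δ ≤ ∑ g, min (A e1 g) (A e2 g) := by
        have h6 : (s : ℝ) * δ = ∑ _g : G.E, δ := by
          rw [Finset.sum_const, nsmul_eq_mul, Finset.card_univ]
        rw [h6]
        exact Finset.sum_le_sum fun g _ => le_min (hδle e1 g) (hδle e2 g)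
      rw [hc]
      linarith
    calc DD (N + n) = col (N + n) e1 - col (N + n) e2 := by
          simp only [hDD, hma, hmi]
          rw [← hma', ← hmi']
      _ = ∑ g, (A e1 g - A e2 g) * (col n g - mi n) := hdiff
      _ ≤ (∑ g, (A e1 g - min (A e1 g) (A e2 g))) * DD n := hbound
      _ ≤ c * DD n := mul_le_mul_of_nonneg_right hsummin (hDD0 n)
  have hDD0le1 : DD 0 ≤ 1 := by
    have hma0 : ma 0 ≤ 1 := by
      apply Finset.sup'_le
      intro e _
      show (G.M ^ 0) e f₀ ≤ 1
      rw [pow_zero, Matrix.one_apply]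
      split <;> norm_num
    have hmi0 : 0 ≤ mi 0 := by
      apply Finset.le_inf'
      intro e _
      exact G.pow_nonneg' hdeg 0 e f₀
    simp only [hDD]
    linarith
  have hiter : ∀ j, DD (j * N) ≤ c ^ j := by
    intro j
    induction j with
    | zero => simpa using hDD0le1
    | succ j ih =>
      have h1 : (j + 1) * N = N + j * N := by ring
      rw [h1, pow_succ]
      calc DD (N + j * N) ≤ c * DD (j * N) := key _
        _ ≤ c * c ^ j := mul_le_mul_of_nonneg_left ih hc0
        _ = c ^ j * c := by ring
  have hmile : ∀ n, mi n ≤ 1 / (s : ℝ) := by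
    intro n
    have hcs : ∑ e, col n e = 1 := G.pow_colsum hdeg n f₀
    have h1 : (s : ℝ) * mi n ≤ 1 := by
      have : (s : ℝ) * mi n = ∑ _e : G.E, mi n := by
        rw [Finset.sum_const, nsmul_eq_mul, Finset.card_univ]
      rw [this, ← hcs]
      exact Finset.sum_le_sum fun e _ => mile n e
    have hspos : (0 : ℝ) < s := by exact_mod_cast hs
    rw [le_div_iff₀ hspos]
    nlinarith [h1]
  have hmage : ∀ n, 1 / (s : ℝ) ≤ ma n := by
    intro n
    have hcs : ∑ e, col n e = 1 := G.pow_colsum hdeg n f₀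
    have h1 : 1 ≤ (s : ℝ) * ma n := by
      have h2 : (s : ℝ) * ma n = ∑ _e : G.E, ma n := by
        rw [Finset.sum_const, nsmul_eq_mul, Finset.card_univ]
      rw [h2, ← hcs]
      exact Finset.sum_le_sum fun e _ => male n e
    have hspos : (0 : ℝ) < s := by exact_mod_cast hs
    rw [div_le_iff₀ hspos]
    nlinarith [h1]
  have habs : ∀ n, |col n e₀ - 1 / (s : ℝ)| ≤ DD n := by
    intro n
    rw [abs_le]
    constructor
    · have h1 := mile n e₀
      have h2 := hmage n
      simp only [hDD]
      linarith
    · have h1 := male n e₀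
      have h2 := hmile n
      simp only [hDD]
      linarith
  rw [Metric.tendsto_atTop]
  intro ε hε
  have hcpow : Filter.Tendsto (fun j => c ^ j) Filter.atTop (nhds 0) :=
    tendsto_pow_atTop_nhds_zero_of_lt_one hc0 hc1
  obtain ⟨K, hK⟩ := (hcpow.eventually_lt_const hε).exists
  refine ⟨K * N, fun n hn => ?_⟩
  have h1 : DD n ≤ DD (K * N) := hDDanti hn
  have h2 : DD (K * N) ≤ c ^ K := hiter K
  rw [Real.dist_eq]
  have h3 := habs n
  calc |col n e₀ - 1 / (s : ℝ)| ≤ DD n := h3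
    _ < ε := by linarith

end Multigraph


namespace Multigraph
variable (G : Multigraph)

lemma card_head_fiber [Fintype G.E] (v : G.V) [Fintype {e : G.E // G.head e = v}] :
    Fintype.card {e : G.E // G.head e = v} = G.deg v := by
  classical
  have e1 : {e : G.E // G.head e = v} ≃ {e : G.E // G.tail e = v} :=
    { toFun := fun e => ⟨G.bar e.1, by rw [G.tail_bar, e.2]⟩
      invFun := fun e => ⟨G.bar e.1, by rw [G.head_bar, e.2]⟩
      left_inv := fun e => Subtype.ext (G.bar_bar e.1)
      right_inv := fun e => Subtype.ext (G.bar_bar e.1) }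
  rw [Fintype.card_congr e1, Fintype.card_subtype]
  rw [show (Finset.filter (fun x => G.tail x = v) Finset.univ) = G.outS v from by
    ext e; simp [outS]]
  exact G.outS_card v

end Multigraph


/-- For a finite connected non-bipartite multigraph with all degrees
`≥ 3`, `q^(n)(x,y) → deg(y)/|E(X)|`. -/
theorem nbrw_limit_nonbipartite (G : Multigraph) [Fintype G.V] [Fintype G.E]
    (hconn : G.Connected) (hdeg : ∀ x, 3 ≤ G.deg x) (hbip : ¬ G.Bipartite) :
    ∀ x y : G.V,
      Filter.Tendsto (fun n : ℕ => G.qv n x y) Filter.atTop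
        (nhds ((G.deg y : ℝ) / (Fintype.card G.E : ℝ))) := by
  classical
  intro x y
  have hne : Nonempty G.E := by
    obtain ⟨e, -⟩ := G.exists_out hdeg x
    exact ⟨e⟩
  haveI := hne
  have hlim := G.tendsto_pow_entry hdeg hconn hbip
  have hqv : ∀ n, G.qv n x y = (1 / (G.deg x : ℝ)) *
      ∑ e : {e : G.E // G.head e = x}, ∑ f : {f : G.E // G.head f = y}, (G.M ^ n) e.1 f.1 := by
    intro n
    unfold Multigraph.qv
    congr 1
    rw [tsum_fintype]
    refine Finset.sum_congr rfl fun e _ => ?_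
    rw [tsum_fintype]
    exact Finset.sum_congr rfl fun f _ => G.qn_eq_pow n e.1 f.1
  have hTend : Filter.Tendsto (fun n => (1 / (G.deg x : ℝ)) *
      ∑ e : {e : G.E // G.head e = x}, ∑ f : {f : G.E // G.head f = y}, (G.M ^ n) e.1 f.1)
      Filter.atTop (nhds ((1 / (G.deg x : ℝ)) *
      ∑ _e : {e : G.E // G.head e = x}, ∑ _f : {f : G.E // G.head f = y},
        (1 / (Fintype.card G.E : ℝ)))) := by
    apply Filter.Tendsto.const_mul
    apply tendsto_finset_sum
    intro e _
    apply tendsto_finset_sum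
    intro f _
    exact hlim e.1 f.1
  have hval : (1 / (G.deg x : ℝ)) *
      ∑ _e : {e : G.E // G.head e = x}, ∑ _f : {f : G.E // G.head f = y},
        (1 / (Fintype.card G.E : ℝ)) = (G.deg y : ℝ) / (Fintype.card G.E : ℝ) := by
    rw [Finset.sum_const, Finset.sum_const, Finset.card_univ, Finset.card_univ,
      G.card_head_fiber x, G.card_head_fiber y]
    have hdx : (0 : ℝ) < (G.deg x : ℝ) := by
      have := hdeg x
      exact_mod_cast Nat.lt_of_lt_of_le (by norm_num) this
    rw [nsmul_eq_mul, nsmul_eq_mul]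
    field_simp
  rw [← hval]
  exact hTend.congr fun n => (hqv n).symm
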